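/- arXiv:2112.12181 — 5 statements merged into one kernel-verified Lean document; each statement's English description precedes it below -/
import Mathlib

section
/- Suppose for all h in a class H of [0,1]-valued functions and all t ∈ [0,1], P({h > t}) − Pₙ({h > t}) ≤ ε·√(P({h > t})), where P is a probability measure and Pₙ the empirical measure of a sample x₁,…,xₙ. Then for all h ∈ H, E_P[h] − (1/n)Σᵢ h(xᵢ) ≤ ε·√(E_P[h]). -/
open MeasureTheory

lemma aux_indicator_integral (a : ℝ) (h0 : 0 ≤ a) (h1 : a ≤ 1) :
    ∫ t in Set.Ioc (0:ℝ) 1, (Set.Iio a).indicator (fun _ => (1:ℝ)) t = a := by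
  rw [integral_indicator_const _ measurableSet_Iio, measureReal_def, Measure.restrict_apply measurableSet_Iio]
  have : Set.Iio a ∩ Set.Ioc (0:ℝ) 1 = Set.Ioo 0 a := by
    ext t; simp only [Set.mem_inter_iff, Set.mem_Iio, Set.mem_Ioc, Set.mem_Ioo]
    constructor
    · rintro ⟨h, h', _⟩; exact ⟨h', h⟩
    · rintro ⟨h, h'⟩; exact ⟨h', h, le_trans h'.le h1⟩
  rw [this, Real.volume_Ioo, ENNReal.toReal_ofReal (by linarith), smul_eq_mul, mul_one, sub_zero]

theorem stmt_5 {X : Type*} [MeasurableSpace X] (P : Measure X) [IsProbabilityMeasure P]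
    (n : ℕ) (x : Fin n → X) (H : Set (X → ℝ)) (ε : ℝ) (hε : 0 ≤ ε)
    (hmeas : ∀ h ∈ H, Measurable h)
    (hrange : ∀ h ∈ H, ∀ x', h x' ∈ Set.Icc (0 : ℝ) 1)
    (hyp : ∀ h ∈ H, ∀ t ∈ Set.Icc (0 : ℝ) 1,
      (P {x' | t < h x'}).toReal - (1 / (n : ℝ)) * ({i : Fin n | t < h (x i)}.ncard : ℝ)
        ≤ ε * Real.sqrt (P {x' | t < h x'}).toReal) :
    ∀ h ∈ H,
      (∫ x', h x' ∂P) - (1 / (n : ℝ)) * ∑ i, h (x i)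
        ≤ ε * Real.sqrt (∫ x', h x' ∂P) := by
  intro h hH
  have hmeash := hmeas h hH
  set μ : Measure ℝ := volume.restrict (Set.Ioc (0:ℝ) 1) with hμ
  haveI : IsProbabilityMeasure μ := ⟨by
    rw [hμ, Measure.restrict_apply_univ, Real.volume_Ioc]
    norm_num⟩
  set F : ℝ → ℝ := fun t => (P {x' | t < h x'}).toReal with hFdef
  set G : ℝ → ℝ := fun t => (1 / (n : ℝ)) * ({i : Fin n | t < h (x i)}.ncard : ℝ) with hGdef
  have hF_meas : Measurable F := by
    apply Measurable.ennreal_toReal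
    exact Antitone.measurable (fun s t hst => measure_mono fun a ha => lt_of_le_of_lt hst ha)
  have hF_nn : ∀ t, 0 ≤ F t := fun t => ENNReal.toReal_nonneg
  have hF_le1 : ∀ t, F t ≤ 1 := fun t => by
    simpa using ENNReal.toReal_mono ENNReal.one_ne_top (prob_le_one (μ := P))
  -- integrability of h
  have h_int : Integrable h P := by
    apply Integrable.mono' (integrable_const (1:ℝ)) hmeash.aestronglyMeasurable
    refine Filter.Eventually.of_forall fun x' => ?_
    rw [Real.norm_eq_abs, abs_of_nonneg (hrange h hH x').1]
    exact (hrange h hH x').2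
  -- layer cake
  have lc : ∫ x', h x' ∂P = ∫ t, F t ∂μ := by
    rw [h_int.integral_eq_integral_meas_lt
      (Filter.Eventually.of_forall fun x' => (hrange h hH x').1)]
    rw [hμ]
    apply setIntegral_eq_of_subset_of_ae_diff_eq_zero measurableSet_Ioi.nullMeasurableSet
      Set.Ioc_subset_Ioi_self
    refine Filter.Eventually.of_forall fun t ht => ?_
    simp only [Set.mem_diff, Set.mem_Ioi, Set.mem_Ioc, not_and, not_le] at ht
    have h1t : (1:ℝ) < t := ht.2 ht.1
    have hempty : {x' | t < h x'} = ∅ := by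
      ext x'
      simp only [Set.mem_setOf_eq, Set.mem_empty_iff_false, iff_false, not_lt]
      exact le_trans (hrange h hH x').2 h1t.le
    simp [hempty]
  -- integrability of F, G, sqrt ∘ F on μ
  have hF_int : Integrable F μ := by
    apply Integrable.mono' (integrable_const (1:ℝ)) hF_meas.aestronglyMeasurable
    exact Filter.Eventually.of_forall fun t => by
      rw [Real.norm_eq_abs, abs_of_nonneg (hF_nn t)]; exact hF_le1 t
  have hG_eq : ∀ t, G t = (1/(n:ℝ)) * ∑ i : Fin n,
      (Set.Iio (h (x i))).indicator (fun _ => (1:ℝ)) t := by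
    intro t
    show (1 / (n : ℝ)) * ({i : Fin n | t < h (x i)}.ncard : ℝ) = _
    congr 1
    rw [Set.ncard_eq_toFinset_card', Set.toFinset_setOf, Finset.card_filter]
    push_cast
    exact Finset.sum_congr rfl fun i _ => by simp [Set.indicator_apply]
  have hind_int : ∀ i : Fin n,
      Integrable ((Set.Iio (h (x i))).indicator (fun _ => (1:ℝ))) μ :=
    fun i => (integrable_const (1:ℝ)).indicator measurableSet_Iio
  have hG_int : Integrable G μ := by
    have : Integrable (fun t => (1/(n:ℝ)) * ∑ i : Fin n,
        (Set.Iio (h (x i))).indicator (fun _ => (1:ℝ)) t) μ :=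
      (integrable_finset_sum Finset.univ fun i _ => hind_int i).const_mul _
    exact this.congr (Filter.Eventually.of_forall fun t => (hG_eq t).symm)
  have hsqrtF_int : Integrable (fun t => Real.sqrt (F t)) μ := by
    apply Integrable.mono' (integrable_const (1:ℝ))
      (Real.continuous_sqrt.measurable.comp hF_meas).aestronglyMeasurable
    refine Filter.Eventually.of_forall fun t => ?_
    simp only [Function.comp_apply]
    rw [Real.norm_eq_abs, abs_of_nonneg (Real.sqrt_nonneg _)]
    rw [show (1:ℝ) = Real.sqrt 1 by simp]
    exact Real.sqrt_le_sqrt (hF_le1 t)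
  -- empirical side
  have sum_eq : (1/(n:ℝ)) * ∑ i, h (x i) = ∫ t, G t ∂μ := by
    rw [integral_congr_ae (Filter.Eventually.of_forall hG_eq)]
    rw [integral_const_mul, integral_finset_sum Finset.univ fun i _ => hind_int i]
    congr 1
    apply Finset.sum_congr rfl fun i _ => ?_
    exact (aux_indicator_integral (h (x i)) (hrange h hH (x i)).1 (hrange h hH (x i)).2).symm
  -- pointwise inequality and monotonicity
  have key : ∫ t, (F t - G t) ∂μ ≤ ∫ t, ε * Real.sqrt (F t) ∂μ := by
    rw [hμ]
    apply setIntegral_mono_on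
    · exact hF_int.sub hG_int
    · exact hsqrtF_int.const_mul ε
    · exact measurableSet_Ioc
    · intro t ht
      exact hyp h hH t ⟨ht.1.le, ht.2⟩
  -- Jensen
  have jensen : ∫ t, Real.sqrt (F t) ∂μ ≤ Real.sqrt (∫ t, F t ∂μ) := by
    apply ConcaveOn.le_map_integral Real.strictConcaveOn_sqrt.concaveOn
      Real.continuous_sqrt.continuousOn isClosed_Ici
      (Filter.Eventually.of_forall fun t => hF_nn t) hF_int hsqrtF_int
  calc (∫ x', h x' ∂P) - (1 / (n : ℝ)) * ∑ i, h (x i)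
      = ∫ t, (F t - G t) ∂μ := by rw [lc, sum_eq, integral_sub hF_int hG_int]
    _ ≤ ∫ t, ε * Real.sqrt (F t) ∂μ := key
    _ = ε * ∫ t, Real.sqrt (F t) ∂μ := integral_const_mul ε _
    _ ≤ ε * Real.sqrt (∫ t, F t ∂μ) := mul_le_mul_of_nonneg_left jensen hε
    _ = ε * Real.sqrt (∫ x', h x' ∂P) := by rw [lc]
end

section
/- Let ℓ be a loss function bounded in [0,1], let G be a finite set of groups, let H be a hypothesis class, and let fₜ be the decision lists produced by the Prepend algorithm on a training set of size n with error function εₙ : G → ℝ₊. If every g ∈ G satisfies Pₙ(g)·εₙ(g) ≥ ε₀ > 0 and min_{h∈H} Lₙ(h) ≤ α, then the algorithm terminates after at most α/ε₀ prepending rounds, and the output f satisfies Lₙ(f | g) ≤ inf_{h∈H} Lₙ(h | g) + εₙ(g) for all g ∈ G. -/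
/-- Number of training examples falling in group `g`. -/
def cntG {X Y : Type*} (n : ℕ) (x : Fin n → X) (_y : Fin n → Y) (g : X → Bool) : ℕ :=
  (Finset.univ.filter fun i => g (x i) = true).card

/-- Empirical risk. -/
noncomputable def empLoss {X Y Z : Type*} (n : ℕ) (x : Fin n → X) (y : Fin n → Y)
    (ℓ : Z → Y → ℝ) (f : X → Z) : ℝ :=
  (1 / (n : ℝ)) * ∑ i, ℓ (f (x i)) (y i)

/-- Empirical conditional risk on group `g`. -/
noncomputable def empCondLoss {X Y Z : Type*} (n : ℕ) (x : Fin n → X) (y : Fin n → Y)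
    (ℓ : Z → Y → ℝ) (f : X → Z) (g : X → Bool) : ℝ :=
  (1 / (cntG n x y g : ℝ)) * ∑ i, if g (x i) then ℓ (f (x i)) (y i) else 0

/-!
Prepending `h` on the group `g` changes the predictions only on `g`, so it lowers the empirical
risk by `Pₙ(g)` times the gain `Lₙ(f | g) - Lₙ(h | g)` in conditional risk. Every round of the
algorithm has gain at least `εₙ(g)`, hence lowers the risk by at least `Pₙ(g) εₙ(g) ≥ ε₀`.
Since the risk starts at most `α` and never becomes negative, there are at most `α / ε₀`
rounds. The guarantee for the output is the stopping condition.
-/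

def prepend {X Z : Type*} (g : X → Bool) (h f : X → Z) : X → Z :=
  fun xx => if g xx then h xx else f xx

section EmpiricalRisk

variable {X Y Z : Type*} (n : ℕ) (x : Fin n → X) (y : Fin n → Y) (ℓ : Z → Y → ℝ)

lemma empLoss_nonneg (hℓ : ∀ z yy, 0 ≤ ℓ z yy) (f : X → Z) : 0 ≤ empLoss n x y ℓ f :=
  mul_nonneg (by positivity) (Finset.sum_nonneg fun i _ => hℓ _ _)

lemma empLoss_sub_empLoss_prepend (g : X → Bool) (h f : X → Z) :
    empLoss n x y ℓ f - empLoss n x y ℓ (prepend g h f) =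
      (cntG n x y g / n) * (empCondLoss n x y ℓ f g - empCondLoss n x y ℓ h g) := by
  set S := ∑ i, if g (x i) then ℓ (f (x i)) (y i) - ℓ (h (x i)) (y i) else 0
  have hL : empLoss n x y ℓ f - empLoss n x y ℓ (prepend g h f) = (1 / n) * S := by
    rw [empLoss, empLoss, ← mul_sub, ← Finset.sum_sub_distrib]
    congr 1
    refine Finset.sum_congr rfl fun i _ => ?_
    by_cases hgi : g (x i) <;> simp [prepend, hgi]
  have hC : empCondLoss n x y ℓ f g - empCondLoss n x y ℓ h g = (1 / cntG n x y g) * S := by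
    rw [empCondLoss, empCondLoss, ← mul_sub, ← Finset.sum_sub_distrib]
    congr 1
    refine Finset.sum_congr rfl fun i _ => ?_
    by_cases hgi : g (x i) <;> simp [hgi]
  rw [hL, hC]
  by_cases hc : (cntG n x y g : ℝ) = 0
  · have hempty : ∀ i, g (x i) = false := by
      simpa [cntG, Finset.card_eq_zero, Finset.filter_eq_empty_iff] using hc
    have hS : S = 0 := Finset.sum_eq_zero fun i _ => by simp [hempty i]
    simp [hS]
  · field_simp

lemma empLoss_prepend_le {g : X → Bool} {h f : X → Z} {ε ε₀ : ℝ}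
    (hmass : (cntG n x y g / n : ℝ) * ε ≥ ε₀)
    (hgain : empCondLoss n x y ℓ f g - empCondLoss n x y ℓ h g ≥ ε) :
    empLoss n x y ℓ (prepend g h f) ≤ empLoss n x y ℓ f - ε₀ := by
  have hP : (0 : ℝ) ≤ cntG n x y g / n := by positivity
  have := empLoss_sub_empLoss_prepend n x y ℓ g h f
  have := mul_le_mul_of_nonneg_left hgain hP
  linarith

end EmpiricalRisk

lemma le_sub_mul_of_forall_lt_succ_le_sub {a : ℕ → ℝ} {ε : ℝ} {T : ℕ}
    (hstep : ∀ t < T, a (t + 1) ≤ a t - ε) : a T ≤ a 0 - T * ε := by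
  induction T with
  | zero => simp
  | succ k ih =>
    have := ih fun t ht => hstep t (Nat.lt_succ_of_lt ht)
    have := hstep k (Nat.lt_succ_self k)
    push_cast
    linarith

theorem stmt_6_general {X Y Z : Type*} (n : ℕ) (x : Fin n → X) (y : Fin n → Y)
    (ℓ : Z → Y → ℝ) (hℓ : ∀ z yy, ℓ z yy ∈ Set.Icc (0 : ℝ) 1)
    (G : Set (X → Bool)) (H : Set (X → Z)) (εn : (X → Bool) → ℝ) (ε₀ α : ℝ)
    (hε₀ : 0 < ε₀)
    (hmass : ∀ g ∈ G, ((cntG n x y g : ℝ) / n) * εn g ≥ ε₀)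
    (T : ℕ) (f : ℕ → X → Z)
    (hα : empLoss n x y ℓ (f 0) ≤ α)
    (hstep : ∀ t < T, ∃ g ∈ G, ∃ h ∈ H,
      empCondLoss n x y ℓ (f t) g - empCondLoss n x y ℓ h g ≥ εn g ∧
      f (t + 1) = fun xx => if g xx then h xx else f t xx)
    (hterm : ∀ g ∈ G, ∀ h ∈ H,
      empCondLoss n x y ℓ (f T) g - empCondLoss n x y ℓ h g < εn g) :
    (T : ℝ) ≤ α / ε₀ ∧
      ∀ g ∈ G, ∀ h ∈ H,
        empCondLoss n x y ℓ (f T) g ≤ empCondLoss n x y ℓ h g + εn g := by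
  have hdescent : ∀ t < T, empLoss n x y ℓ (f (t + 1)) ≤ empLoss n x y ℓ (f t) - ε₀ := by
    intro t ht
    obtain ⟨g, hg, h, -, hgain, hf⟩ := hstep t ht
    exact hf ▸ empLoss_prepend_le n x y ℓ (hmass g hg) hgain
  have hfinal := le_sub_mul_of_forall_lt_succ_le_sub (a := fun t => empLoss n x y ℓ (f t)) hdescent
  have hnonneg := empLoss_nonneg n x y ℓ (fun z yy => (hℓ z yy).1) (f T)
  refine ⟨(le_div_iff₀ hε₀).2 (by linarith), fun g hg h hh => ?_⟩
  linarith [hterm g hg h hh]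

/-- Lemma on the Prepend algorithm: if every group has `Pₙ(g) · εₙ(g) ≥ ε₀` and the
initial hypothesis has empirical risk at most `α`, then the algorithm stops after at
most `α / ε₀` prepending rounds and the output satisfies the multi-group guarantee. -/
theorem stmt_6 {X Y Z : Type*} (n : ℕ) (x : Fin n → X) (y : Fin n → Y)
    (ℓ : Z → Y → ℝ) (hℓ : ∀ z yy, ℓ z yy ∈ Set.Icc (0 : ℝ) 1)
    (G : Set (X → Bool)) (H : Set (X → Z)) (εn : (X → Bool) → ℝ) (ε₀ α : ℝ)
    (hε₀ : 0 < ε₀)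
    (hmass : ∀ g ∈ G, ((cntG n x y g : ℝ) / n) * εn g ≥ ε₀)
    (T : ℕ) (f : ℕ → X → Z)
    (hf0 : f 0 ∈ H)
    (hf0min : ∀ h ∈ H, empLoss n x y ℓ (f 0) ≤ empLoss n x y ℓ h)
    (hα : empLoss n x y ℓ (f 0) ≤ α)
    (hstep : ∀ t < T, ∃ g ∈ G, ∃ h ∈ H,
      empCondLoss n x y ℓ (f t) g - empCondLoss n x y ℓ h g ≥ εn g ∧
      f (t + 1) = fun xx => if g xx then h xx else f t xx)
    (hterm : ∀ g ∈ G, ∀ h ∈ H,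
      empCondLoss n x y ℓ (f T) g - empCondLoss n x y ℓ h g < εn g) :
    (T : ℝ) ≤ α / ε₀ ∧
      ∀ g ∈ G, ∀ h ∈ H,
        empCondLoss n x y ℓ (f T) g ≤ empCondLoss n x y ℓ h g + εn g :=
  stmt_6_general n x y ℓ hℓ G H εn ε₀ α hε₀ hmass T f hα hstep hterm
end

section
/- Let X = {x₀, x₁, x₂} with a uniform marginal distribution, groups g₁ = {x₀, x₁}, g₂ = {x₀, x₂}, and 3-class constant hypotheses h₁ ≡ 1 and h₂ ≡ 2. There exist two conditional label distributions D₁ and D₂ on labels {1,2,3} such that (a) P_{D₁}(g) = P_{D₂}(g) and L_{D₁}(h | g) = L_{D₂}(h | g) for all h ∈ {h₁,h₂}, g ∈ {g₁,g₂} (in fact L(h₁|g₁)=1/2, L(h₁|g₂)=7/8, L(h₂|g₁)=7/8, L(h₂|g₂)=1/2 under both), and (b) for every decision list f over ({g₁,g₂}, {h₁,h₂}) there exist i ∈ {1,2} and g ∈ {g₁,g₂} with L_{D_i}(f | g) ≥ min_h L_{D_i}(h | g) + 1/8. -/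
/-- Evaluate a decision list: the head pair is checked first; if no group matches,
the default hypothesis is used. -/
def dlEval {X Z : Type*} : List ((X → Bool) × (X → Z)) → (X → Z) → X → Z
  | [], h0, x => h0 x
  | p :: rest, h0, x => if p.1 x then p.2 x else dlEval rest h0 x

/-- Conditional zero-one risk of `f` given group `g`, for a uniform marginal over `Fin 3`
and conditional label distribution `D` (labels in `Fin 3`, standing for `{1,2,3}`). -/
noncomputable def condRisk (D : Fin 3 → Fin 3 → ℝ) (f : Fin 3 → Fin 3)
    (g : Finset (Fin 3)) : ℝ :=
  (∑ x ∈ g, ∑ y, D x y * (if f x = y then 0 else 1)) / (g.card : ℝ)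

/-- Membership indicator of a finite group. -/
def gb (g : Finset (Fin 3)) : Fin 3 → Bool := fun x => decide (x ∈ g)

/-- Constant hypothesis predicting label `1` (encoded `0`). -/
def h₁ : Fin 3 → Fin 3 := fun _ => 0
/-- Constant hypothesis predicting label `2` (encoded `1`). -/
def h₂ : Fin 3 → Fin 3 := fun _ => 1
/-- Group `g₁ = {x₀, x₁}`. -/
def G₁ : Finset (Fin 3) := {0, 1}
/-- Group `g₂ = {x₀, x₂}`. -/
def G₂ : Finset (Fin 3) := {0, 2}

/-- Witness distribution `D₁`. -/
noncomputable def Dd₁ : Fin 3 → Fin 3 → ℝ := ![![1/4, 0, 3/4], ![3/4, 1/4, 0], ![0, 1, 0]]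
/-- Witness distribution `D₂`. -/
noncomputable def Dd₂ : Fin 3 → Fin 3 → ℝ := ![![0, 1/4, 3/4], ![1, 0, 0], ![1/4, 3/4, 0]]

lemma fne01 : (0:Fin 3) ≠ 1 := by decide
lemma fne02 : (0:Fin 3) ≠ 2 := by decide
lemma fne10 : (1:Fin 3) ≠ 0 := by decide
lemma fne12 : (1:Fin 3) ≠ 2 := by decide
lemma fne20 : (2:Fin 3) ≠ 0 := by decide
lemma fne21 : (2:Fin 3) ≠ 1 := by decide

lemma crG₁ (D : Fin 3 → Fin 3 → ℝ) (f : Fin 3 → Fin 3) :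
    condRisk D f G₁ = ((∑ y, D 0 y * (if f 0 = y then 0 else 1)) +
      (∑ y, D 1 y * (if f 1 = y then 0 else 1))) / 2 := by
  simp [condRisk, G₁, Finset.sum_pair fne01]

lemma crG₂ (D : Fin 3 → Fin 3 → ℝ) (f : Fin 3 → Fin 3) :
    condRisk D f G₂ = ((∑ y, D 0 y * (if f 0 = y then 0 else 1)) +
      (∑ y, D 2 y * (if f 2 = y then 0 else 1))) / 2 := by
  simp [condRisk, G₂, Finset.sum_pair fne02]

lemma dl_struct (L : List ((Fin 3 → Bool) × (Fin 3 → Fin 3))) (h₀ : Fin 3 → Fin 3)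
    (hL : ∀ p ∈ L, (p.1 = gb G₁ ∨ p.1 = gb G₂) ∧ (p.2 = h₁ ∨ p.2 = h₂))
    (h0 : h₀ = h₁ ∨ h₀ = h₂) :
    (dlEval L h₀ 0 = dlEval L h₀ 1 ∨ dlEval L h₀ 0 = dlEval L h₀ 2) ∧
    (dlEval L h₀ 0 = 0 ∨ dlEval L h₀ 0 = 1) ∧
    (dlEval L h₀ 1 = 0 ∨ dlEval L h₀ 1 = 1) ∧
    (dlEval L h₀ 2 = 0 ∨ dlEval L h₀ 2 = 1) := by
  induction L with
  | nil =>
    rcases h0 with rfl | rfl <;> simp [dlEval, h₁, h₂]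
  | cons p rest ih =>
    obtain ⟨hg, hh⟩ := hL p (List.mem_cons_self (a := p) (l := rest))
    have ihr := ih (fun q hq => hL q (List.mem_cons_of_mem p hq))
    have hv : (p.2 0 = 0 ∧ p.2 1 = 0 ∧ p.2 2 = 0) ∨ (p.2 0 = 1 ∧ p.2 1 = 1 ∧ p.2 2 = 1) := by
      rcases hh with e | e <;> rw [e] <;> simp [h₁, h₂]
    rcases hg with hg1 | hg1 <;>
      simp only [dlEval, hg1, gb, G₁, G₂] <;>
      norm_num <;>
      rcases hv with ⟨a, b, c⟩ | ⟨a, b, c⟩ <;>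
      simp [a, b, c, ihr.2.2.2, ihr.2.2.1]

/-- Inadmissibility of order-1 evaluation functions: two scenarios with identical
group masses and conditional risks, but no decision list is simultaneously good. -/
theorem stmt_11 : ∃ D₁ D₂ : Fin 3 → Fin 3 → ℝ,
    (∀ x y, 0 ≤ D₁ x y) ∧ (∀ x, ∑ y, D₁ x y = 1) ∧
    (∀ x y, 0 ≤ D₂ x y) ∧ (∀ x, ∑ y, D₂ x y = 1) ∧
    (∀ h ∈ ({h₁, h₂} : Set (Fin 3 → Fin 3)), ∀ g ∈ ({G₁, G₂} : Set (Finset (Fin 3))),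
      condRisk D₁ h g = condRisk D₂ h g) ∧
    condRisk D₁ h₁ G₁ = 1 / 2 ∧ condRisk D₁ h₁ G₂ = 7 / 8 ∧
    condRisk D₁ h₂ G₁ = 7 / 8 ∧ condRisk D₁ h₂ G₂ = 1 / 2 ∧
    (∀ (L : List ((Fin 3 → Bool) × (Fin 3 → Fin 3))) (h₀ : Fin 3 → Fin 3),
      (∀ p ∈ L, (p.1 = gb G₁ ∨ p.1 = gb G₂) ∧ (p.2 = h₁ ∨ p.2 = h₂)) →
      (h₀ = h₁ ∨ h₀ = h₂) →
      ∃ D ∈ ({D₁, D₂} : Set (Fin 3 → Fin 3 → ℝ)), ∃ g ∈ ({G₁, G₂} : Set (Finset (Fin 3))),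
        condRisk D (dlEval L h₀) g ≥ min (condRisk D h₁ g) (condRisk D h₂ g) + 1 / 8) := by
  refine ⟨Dd₁, Dd₂, ?_, ?_, ?_, ?_, ?_, ?_, ?_, ?_, ?_, ?_⟩
  · intro x y; fin_cases x <;> fin_cases y <;> norm_num [Dd₁]
  · intro x; fin_cases x <;> norm_num [Fin.sum_univ_three, Matrix.cons_val_two, Matrix.vecHead, Matrix.vecTail, Dd₁]
  · intro x y; fin_cases x <;> fin_cases y <;> norm_num [Dd₂]
  · intro x; fin_cases x <;> norm_num [Fin.sum_univ_three, Matrix.cons_val_two, Matrix.vecHead, Matrix.vecTail, Dd₂]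
  · rintro h hh g hg
    simp only [Set.mem_insert_iff, Set.mem_singleton_iff] at hh hg
    rcases hh with rfl | rfl <;> rcases hg with rfl | rfl <;>
      simp only [crG₁, crG₂] <;>
      norm_num [Fin.sum_univ_three, Matrix.cons_val_two, Matrix.vecHead, Matrix.vecTail, Dd₁, Dd₂, h₁, h₂,
        fne01, fne02, fne10, fne12, fne20, fne21]
  · simp only [crG₁]
    norm_num [Fin.sum_univ_three, Matrix.cons_val_two, Matrix.vecHead, Matrix.vecTail, Dd₁, h₁, fne01, fne02, fne10, fne12, fne20, fne21]
  · simp only [crG₂]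
    norm_num [Fin.sum_univ_three, Matrix.cons_val_two, Matrix.vecHead, Matrix.vecTail, Dd₁, h₁, fne01, fne02, fne10, fne12, fne20, fne21]
  · simp only [crG₁]
    norm_num [Fin.sum_univ_three, Matrix.cons_val_two, Matrix.vecHead, Matrix.vecTail, Dd₁, h₂, fne01, fne02, fne10, fne12, fne20, fne21]
  · simp only [crG₂]
    norm_num [Fin.sum_univ_three, Matrix.cons_val_two, Matrix.vecHead, Matrix.vecTail, Dd₁, h₂, fne01, fne02, fne10, fne12, fne20, fne21]
  · intro L h₀ hL h0
    obtain ⟨hlink, h0v, h1v, h2v⟩ := dl_struct L h₀ hL h0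
    set f := dlEval L h₀ with hf
    rcases hlink with he | he
    · rcases h0v with e0 | e0
      · have e1 : f 1 = 0 := he.symm.trans e0
        rcases h2v with e2 | e2
        · refine ⟨Dd₁, by simp, G₂, by simp, ?_⟩
          simp only [crG₂]
          norm_num [Fin.sum_univ_three, Matrix.cons_val_two, Matrix.vecHead, Matrix.vecTail, Dd₁, h₁, h₂, e0, e2,
            fne01, fne02, fne10, fne12, fne20, fne21]
        · refine ⟨Dd₂, by simp, G₂, by simp, ?_⟩
          simp only [crG₂]
          norm_num [Fin.sum_univ_three, Matrix.cons_val_two, Matrix.vecHead, Matrix.vecTail, Dd₂, h₁, h₂, e0, e2,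
            fne01, fne02, fne10, fne12, fne20, fne21]
      · have e1 : f 1 = 1 := he.symm.trans e0
        refine ⟨Dd₂, by simp, G₁, by simp, ?_⟩
        simp only [crG₁]
        norm_num [Fin.sum_univ_three, Matrix.cons_val_two, Matrix.vecHead, Matrix.vecTail, Dd₂, h₁, h₂, e0, e1,
          fne01, fne02, fne10, fne12, fne20, fne21]
    · rcases h0v with e0 | e0
      · have e2 : f 2 = 0 := he.symm.trans e0
        refine ⟨Dd₁, by simp, G₂, by simp, ?_⟩
        simp only [crG₂]
        norm_num [Fin.sum_univ_three, Matrix.cons_val_two, Matrix.vecHead, Matrix.vecTail, Dd₁, h₁, h₂, e0, e2,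
          fne01, fne02, fne10, fne12, fne20, fne21]
      · have e2 : f 2 = 1 := he.symm.trans e0
        rcases h1v with e1 | e1
        · refine ⟨Dd₁, by simp, G₁, by simp, ?_⟩
          simp only [crG₁]
          norm_num [Fin.sum_univ_three, Matrix.cons_val_two, Matrix.vecHead, Matrix.vecTail, Dd₁, h₁, h₂, e0, e1,
            fne01, fne02, fne10, fne12, fne20, fne21]
        · refine ⟨Dd₂, by simp, G₁, by simp, ?_⟩
          simp only [crG₁]
          norm_num [Fin.sum_univ_three, Matrix.cons_val_two, Matrix.vecHead, Matrix.vecTail, Dd₂, h₁, h₂, e0, e1,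
            fne01, fne02, fne10, fne12, fne20, fne21]
end

section
/- Let X = {x₀,x₁,x₂} with P(x₀) = 1−2ε, P(x₁) = P(x₂) = ε for 0 < ε ≤ 1/2. Define η ≡ 1, g ≡ 1, f(x₀)=1, f(x₁)=f(x₂)=0, h(x₀)=h(x₁)=+1, h(x₂)=−1, and c = h·g. Then: (i) E_x[c(x)·(f(x) − η(x))] = 0 (so f is 0-multiaccurate w.r.t. {c}); (ii) Pr_x(h(x) ≠ sign encoding of η(x) | x ∈ g), i.e. Pr_x(x = x₂) = ε; and (iii) Pr_x(f(x) ≠ η(x) | x ∈ g) = 2ε. -/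
theorem stmt_13_general (ε : ℝ) :
    let p : Fin 3 → ℝ := ![1 - 2 * ε, ε, ε]
    let η : Fin 3 → ℝ := fun _ => 1
    let f : Fin 3 → ℝ := ![1, 0, 0]
    let h : Fin 3 → ℝ := ![1, 1, -1]
    let g : Fin 3 → ℝ := fun _ => 1
    let c : Fin 3 → ℝ := fun x => h x * g x
    (∑ x, p x * (c x * (f x - η x)) = 0) ∧
    (∑ x, (if h x = 2 * η x - 1 then 0 else p x)) = ε ∧
    (∑ x, (if f x = η x then 0 else p x)) = 2 * ε := by
  refine ⟨?_, ?_, ?_⟩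
  -- f errs on x₁ and x₂, which have equal mass and opposite signs of c, so the errors cancel.
  · simp [Fin.sum_univ_three]
  · simp [Fin.sum_univ_three]; norm_num
  · simp [Fin.sum_univ_three, two_mul]

/-- A 0-multiaccurate predictor can have twice the conditional error of the benchmark. -/
theorem stmt_13 (ε : ℝ) (hε : 0 < ε) (hε' : ε ≤ 1 / 2) :
    let p : Fin 3 → ℝ := ![1 - 2 * ε, ε, ε]
    let η : Fin 3 → ℝ := fun _ => 1
    let f : Fin 3 → ℝ := ![1, 0, 0]
    let h : Fin 3 → ℝ := ![1, 1, -1]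
    let g : Fin 3 → ℝ := fun _ => 1
    let c : Fin 3 → ℝ := fun x => h x * g x
    (∑ x, p x * (c x * (f x - η x)) = 0) ∧
    (∑ x, (if h x = 2 * η x - 1 then 0 else p x)) = ε ∧
    (∑ x, (if f x = η x then 0 else p x)) = 2 * ε :=
  stmt_13_general ε
end

section
/- Let (Vₜ)ₜ₌₁ⁿ be a martingale difference sequence adapted to a filtration, with |Vₜ| ≤ a almost surely and Σₜ E[Vₜ² | F_{t−1}] ≤ b² almost surely. Then for any δ ∈ (0,1), with probability at least 1−δ, Σₜ Vₜ ≤ (2/3)·a·log(1/δ) + b·√(2·log(1/δ)). -/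
open MeasureTheory Real

section CalcLemmas

/-- A function vanishing at 0 whose derivative has the sign of `x` is nonnegative. -/
lemma freedman_aux_nonneg (f f' : ℝ → ℝ) (hd : ∀ x, HasDerivAt f (f' x) x)
    (h0 : f 0 = 0) (hpos : ∀ x, 0 ≤ x → 0 ≤ f' x) (hneg : ∀ x, x ≤ 0 → f' x ≤ 0)
    (y : ℝ) : 0 ≤ f y := by
  rcases le_or_gt 0 y with hy | hy
  · have hmono : MonotoneOn f (Set.Ici (0:ℝ)) := by
      refine monotoneOn_of_deriv_nonneg (convex_Ici 0)
        (fun x _ => (hd x).continuousAt.continuousWithinAt)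
        (fun x hx => (hd x).differentiableAt.differentiableWithinAt) ?_
      intro x hx
      rw [(hd x).deriv]
      exact hpos x (by simp only [interior_Ici, Set.mem_Ioi] at hx; linarith)
    have := hmono Set.self_mem_Ici (Set.mem_Ici.2 hy) hy
    rwa [h0] at this
  · have hanti : AntitoneOn f (Set.Iic (0:ℝ)) := by
      refine antitoneOn_of_deriv_nonpos (convex_Iic 0)
        (fun x _ => (hd x).continuousAt.continuousWithinAt)
        (fun x hx => (hd x).differentiableAt.differentiableWithinAt) ?_
      intro x hx
      rw [(hd x).deriv]
      exact hneg x (by simp only [interior_Iic, Set.mem_Iio] at hx; linarith)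
    have := hanti (Set.mem_Iic.2 hy.le) Set.self_mem_Iic hy.le
    rwa [h0] at this

lemma freedman_G_nonneg (y : ℝ) : 0 ≤ 1 + (y - 1) * Real.exp y := by
  refine freedman_aux_nonneg (fun y => 1 + (y - 1) * Real.exp y) (fun x => x * Real.exp x)
    (fun x => ?_) (by norm_num)
    (fun x hx => by positivity)
    (fun x hx => mul_nonpos_of_nonpos_of_nonneg hx (Real.exp_pos x).le) y
  have : HasDerivAt (fun y : ℝ => 1 + (y - 1) * Real.exp y)
      (0 + (1 * Real.exp x + (x - 1) * Real.exp x)) x :=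
    (hasDerivAt_const x 1).add
      (((hasDerivAt_id x).sub_const 1).mul (Real.hasDerivAt_exp x))
  convert this using 1; ring

lemma freedman_g_mono : Monotone (fun y : ℝ => y + 2 + (y - 2) * Real.exp y) := by
  have hd : ∀ x : ℝ, HasDerivAt (fun y : ℝ => y + 2 + (y - 2) * Real.exp y)
      (1 + (x - 1) * Real.exp x) x := by
    intro x
    have : HasDerivAt (fun y : ℝ => y + 2 + (y - 2) * Real.exp y)
        (1 + (1 * Real.exp x + (x - 2) * Real.exp x)) x :=
      ((hasDerivAt_id x).add_const 2).add
        (((hasDerivAt_id x).sub_const 2).mul (Real.hasDerivAt_exp x))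
    convert this using 1; ring
  refine monotone_of_deriv_nonneg (fun x => (hd x).differentiableAt) ?_
  intro x; rw [(hd x).deriv]; exact freedman_G_nonneg x

/-- Master pointwise inequality: `(1 - y/3) * (exp y - 1 - y) ≤ y^2 / 2`. -/
lemma freedman_master (y : ℝ) :
    (1 - y / 3) * (Real.exp y - 1 - y) ≤ y ^ 2 / 2 := by
  have key : 0 ≤ y ^ 2 / 2 - (1 - y / 3) * (Real.exp y - 1 - y) := by
    refine freedman_aux_nonneg
      (fun y => y ^ 2 / 2 - (1 - y / 3) * (Real.exp y - 1 - y))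
      (fun x => (x + 2 + (x - 2) * Real.exp x) / 3) (fun x => ?_) (by norm_num) ?_ ?_ y
    · have h1 : HasDerivAt (fun y : ℝ => y ^ 2 / 2) x x := by
        simpa using ((hasDerivAt_pow 2 x).div_const 2)
      have h2 : HasDerivAt (fun y : ℝ => (1 - y / 3) * (Real.exp y - 1 - y))
          ((0 - 1/3) * (Real.exp x - 1 - x) + (1 - x / 3) * (Real.exp x - 0 - 1)) x := by
        refine HasDerivAt.mul ?_ ?_
        · exact (hasDerivAt_const x 1).sub ((hasDerivAt_id x).div_const 3)
        · exact ((Real.hasDerivAt_exp x).sub (hasDerivAt_const x 1)).sub (hasDerivAt_id x)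
      exact (h1.sub h2).congr_deriv (by ring)
    · intro x hx
      have h := freedman_g_mono hx
      simp only at h
      have h0 : (0:ℝ) + 2 + (0 - 2) * Real.exp 0 = 0 := by simp
      rw [h0] at h
      linarith
    · intro x hx
      have h := freedman_g_mono hx
      simp only at h
      have h0 : (0:ℝ) + 2 + (0 - 2) * Real.exp 0 = 0 := by simp
      rw [h0] at h
      linarith
  linarith

/-- Key exponential bound used in Freedman's inequality. -/
lemma freedman_exp_bound {y r : ℝ} (hyr : y ≤ r) (hr3 : r < 3) :
    Real.exp y ≤ 1 + y + y ^ 2 / (2 * (1 - r / 3)) := by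
  have hm := freedman_master y
  have he : 0 ≤ Real.exp y - 1 - y := by
    have := Real.add_one_le_exp y; linarith
  have hden : 0 < 1 - r / 3 := by linarith
  have h1 : (1 - r / 3) * (Real.exp y - 1 - y) ≤ y ^ 2 / 2 := by
    have : (1 - r / 3) * (Real.exp y - 1 - y) ≤ (1 - y / 3) * (Real.exp y - 1 - y) := by
      apply mul_le_mul_of_nonneg_right _ he; linarith
    linarith
  have h2 : Real.exp y - 1 - y ≤ y ^ 2 / (2 * (1 - r / 3)) := by
    rw [le_div_iff₀ (by positivity)]
    nlinarith
  linarith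

lemma freedman_kappa_eq (L c b : ℝ) (hc : 0 < c) (hb : 0 < b) :
    (2 * L / c ^ 2) / (2 * (b / c)) * b ^ 2 = L * b / c := by
  field_simp

end CalcLemmas

set_option maxHeartbeats 1000000 in
/-- Freedman's inequality for martingale difference sequences. -/
theorem stmt_18 {Ω : Type*} {m0 : MeasurableSpace Ω} (μ : Measure Ω) [IsProbabilityMeasure μ]
    (F : Filtration ℕ m0) (n : ℕ) (V : ℕ → Ω → ℝ) (a b δ : ℝ)
    (ha : 0 ≤ a) (hb : 0 ≤ b) (hδ : δ ∈ Set.Ioo (0 : ℝ) 1)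
    (hadapt : ∀ t, StronglyMeasurable[F (t + 1)] (V (t + 1)))
    (hint : ∀ t, Integrable (V (t + 1)) μ)
    (hmds : ∀ t, μ[V (t + 1)|F t] =ᵐ[μ] 0)
    (hbdd : ∀ t, ∀ᵐ ω ∂μ, |V (t + 1) ω| ≤ a)
    (hvar : ∀ᵐ ω ∂μ, ∑ t ∈ Finset.range n, (μ[(V (t + 1)) ^ 2|F t]) ω ≤ b ^ 2) :
    ENNReal.ofReal (1 - δ) ≤
      μ {ω | ∑ t ∈ Finset.range n, V (t + 1) ω
        ≤ (2 / 3) * a * Real.log (1 / δ) + b * Real.sqrt (2 * Real.log (1 / δ))} := by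
  obtain ⟨hδ0, hδ1⟩ := hδ
  set L : ℝ := Real.log (1 / δ) with hLdef
  have hL0 : 0 < L := Real.log_pos (by rw [lt_div_iff₀ hδ0]; linarith)
  set x : ℝ := 2 / 3 * a * L + b * Real.sqrt (2 * L) with hxdef
  have hx0 : 0 ≤ x := by positivity
  set S : Ω → ℝ := fun ω => ∑ t ∈ Finset.range n, V (t + 1) ω with hSdef
  -- strong measurability of partial sums w.r.t. the filtration
  have hSmeas : ∀ k : ℕ, StronglyMeasurable[F k] (fun ω => ∑ t ∈ Finset.range k, V (t + 1) ω) := by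
    intro k
    apply Finset.stronglyMeasurable_fun_sum
    intro t ht
    exact (hadapt t).mono (F.mono (Finset.mem_range.1 ht))
  have hVmeas : ∀ t : ℕ, StronglyMeasurable (V (t + 1)) :=
    fun t => (hadapt t).mono (F.le (t + 1))
  have hV2int : ∀ t : ℕ, Integrable (fun ω => V (t + 1) ω ^ 2) μ := by
    intro t
    refine Integrable.mono' (integrable_const (a ^ 2))
      ((hVmeas t).pow 2).aestronglyMeasurable ?_
    filter_upwards [hbdd t] with ω hω
    rw [Real.norm_eq_abs, abs_of_nonneg (sq_nonneg _)]
    calc V (t + 1) ω ^ 2 = |V (t + 1) ω| ^ 2 := (sq_abs _).symm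
    _ ≤ a ^ 2 := by gcongr
  have hσ0 : ∀ t : ℕ, 0 ≤ᵐ[μ] μ[(V (t + 1)) ^ 2|F t] := by
    intro t
    exact condExp_nonneg (Filter.Eventually.of_forall fun ω => sq_nonneg _)
  have hset : MeasurableSet {ω | S ω ≤ x} :=
    measurableSet_le ((hSmeas n).mono (F.le n)).measurable measurable_const
  clear_value L x S
  have hsets : {ω | ∑ t ∈ Finset.range n, V (t + 1) ω ≤ x} = {ω | S ω ≤ x} := by
    ext ω
    simp only [Set.mem_setOf_eq, hSdef]
  rcases eq_or_lt_of_le hb with hb0 | hbpos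
  · -- degenerate case b = 0 : all the increments vanish a.e.
    have hzero : ∀ t ∈ Finset.range n, V (t + 1) =ᵐ[μ] 0 := by
      intro t ht
      have hσsum : ∀ᵐ ω ∂μ, ∀ s, s ∈ Finset.range n → 0 ≤ (μ[(V (s + 1)) ^ 2|F s]) ω :=
        ae_all_iff.2 fun s => (hσ0 s).mono fun ω h _ => h
      have hσt : μ[(V (t + 1)) ^ 2|F t] =ᵐ[μ] 0 := by
        filter_upwards [hvar, hσsum] with ω h1 h2
        have hsum0 : ∑ s ∈ Finset.range n, (μ[(V (s + 1)) ^ 2|F s]) ω = 0 := by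
          have := Finset.sum_nonneg h2
          rw [← hb0] at h1
          simpa using le_antisymm (by simpa using h1) this
        have := (Finset.sum_eq_zero_iff_of_nonneg h2).1 hsum0 t ht
        simpa using this
      have hI : ∫ ω, V (t + 1) ω ^ 2 ∂μ = 0 := by
        have h1 := integral_condExp (μ := μ) (f := (V (t + 1)) ^ 2) (F.le t)
        calc ∫ ω, V (t + 1) ω ^ 2 ∂μ = ∫ ω, ((V (t + 1)) ^ 2) ω ∂μ := rfl
        _ = ∫ ω, (μ[(V (t + 1)) ^ 2|F t]) ω ∂μ := h1.symm
        _ = 0 := integral_eq_zero_of_ae hσt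
      have := (integral_eq_zero_iff_of_nonneg (fun ω => sq_nonneg _) (hV2int t)).1 hI
      filter_upwards [this] with ω hω
      have : V (t + 1) ω ^ 2 = 0 := hω
      simpa using pow_eq_zero_iff (n := 2) (by norm_num) |>.1 this
    have hae : ∀ᵐ ω ∂μ, S ω ≤ x := by
      have hz : ∀ᵐ ω ∂μ, ∀ t, t ∈ Finset.range n → V (t + 1) ω = 0 :=
        ae_all_iff.2 fun t => by
          by_cases ht : t ∈ Finset.range n
          · exact (hzero t ht).mono fun ω h _ => h
          · exact Filter.Eventually.of_forall fun ω h => absurd h ht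
      filter_upwards [hz] with ω hω
      have hz2 : S ω = 0 := by rw [hSdef]; exact Finset.sum_eq_zero hω
      rw [hz2]; exact hx0
    have : μ {ω | S ω ≤ x} = 1 := by
      rw [← measure_univ (μ := μ)]
      apply measure_congr
      rw [Filter.eventuallyEq_univ]
      exact hae
    rw [hsets, this]
    exact ENNReal.ofReal_le_one.2 (by linarith)
  · -- main case b > 0
    set c : ℝ := b + a / 3 * Real.sqrt (2 * L) with hcdef
    have hsq0 : 0 ≤ Real.sqrt (2 * L) := Real.sqrt_nonneg _
    have hsqsq : Real.sqrt (2 * L) ^ 2 = 2 * L := Real.sq_sqrt (by linarith)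
    have ha3 : 0 ≤ a / 3 * Real.sqrt (2 * L) := by positivity
    have hc : 0 < c := by rw [hcdef]; linarith
    set l : ℝ := Real.sqrt (2 * L) / c with hldef
    have hl0 : 0 ≤ l := div_nonneg hsq0 hc.le
    have hla3 : l * a < 3 := by
      rw [hldef, div_mul_eq_mul_div, div_lt_iff₀ hc, hcdef]
      nlinarith
    have hden : 0 < 1 - l * a / 3 := by linarith
    set κ : ℝ := l ^ 2 / (2 * (1 - l * a / 3)) with hκdef
    have hκ0 : 0 ≤ κ := div_nonneg (sq_nonneg _) (by linarith)
    set T : ℕ → Ω → ℝ := fun k ω => ∑ t ∈ Finset.range k, (μ[(V (t + 1)) ^ 2|F t]) ω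
      with hTdef
    set Z : ℕ → Ω → ℝ := fun k ω =>
      Real.exp (l * (∑ t ∈ Finset.range k, V (t + 1) ω) - κ * T k ω) with hZdef
    clear_value c l κ T Z
    have hTmeas : ∀ k, StronglyMeasurable[F k] (T k) := fun k => by
      rw [hTdef]
      exact Finset.stronglyMeasurable_fun_sum _ fun t ht =>
        stronglyMeasurable_condExp.mono (F.mono (Finset.mem_range.1 ht).le)
    have hZmeas : ∀ k, StronglyMeasurable[F k] (Z k) := fun k => by
      rw [hZdef]
      exact Real.continuous_exp.comp_stronglyMeasurable
        (((hSmeas k).const_mul l).sub ((hTmeas k).const_mul κ))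
    have hZpos : ∀ k ω, 0 < Z k ω := fun k ω => by
      rw [hZdef]; exact Real.exp_pos _
    have hbddall : ∀ᵐ ω ∂μ, ∀ t, |V (t + 1) ω| ≤ a := ae_all_iff.2 hbdd
    have hσ0all : ∀ᵐ ω ∂μ, ∀ t, 0 ≤ (μ[(V (t + 1)) ^ 2|F t]) ω := ae_all_iff.2 hσ0
    have hZbd : ∀ k, ∀ᵐ ω ∂μ, Z k ω ≤ Real.exp (l * (k * a)) := by
      intro k
      filter_upwards [hbddall, hσ0all] with ω h1 h2
      rw [hZdef]
      apply Real.exp_le_exp.2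
      have hS1 : ∑ t ∈ Finset.range k, V (t + 1) ω ≤ k * a := by
        calc ∑ t ∈ Finset.range k, V (t + 1) ω ≤ ∑ t ∈ Finset.range k, a :=
          Finset.sum_le_sum fun t _ => (abs_le.1 (h1 t)).2
        _ = k * a := by rw [Finset.sum_const, Finset.card_range, nsmul_eq_mul]
      have hT1 : 0 ≤ T k ω := by
        rw [hTdef]; exact Finset.sum_nonneg fun t _ => h2 t
      have h3 := mul_le_mul_of_nonneg_left hS1 hl0
      nlinarith [mul_nonneg hκ0 hT1]
    have hZint : ∀ k, Integrable (Z k) μ := fun k =>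
      Integrable.mono' (integrable_const (Real.exp (l * (k * a))))
        ((hZmeas k).mono (F.le k)).aestronglyMeasurable
        ((hZbd k).mono fun ω h => by
          rw [Real.norm_eq_abs, abs_of_nonneg (hZpos k ω).le]; exact h)
    have hEint : ∀ k, Integrable (fun ω => Real.exp (l * V (k + 1) ω)) μ := fun k =>
      Integrable.mono' (integrable_const (Real.exp (l * a)))
        (Real.continuous_exp.comp_stronglyMeasurable
          ((hVmeas k).const_mul l)).aestronglyMeasurable
        ((hbdd k).mono fun ω h => by
          rw [Real.norm_eq_abs, abs_of_nonneg (Real.exp_pos _).le]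
          exact Real.exp_le_exp.2 (mul_le_mul_of_nonneg_left (abs_le.1 h).2 hl0))
    -- conditional one-step bound
    have hcond : ∀ k, μ[(fun ω => Real.exp (l * V (k + 1) ω))|F k] ≤ᵐ[μ]
        fun ω => 1 + κ * (μ[(V (k + 1)) ^ 2|F k]) ω := by
      intro k
      have hpt : (fun ω => Real.exp (l * V (k + 1) ω)) ≤ᵐ[μ]
          (fun _ : Ω => (1 : ℝ)) + (l • V (k + 1) + κ • (V (k + 1)) ^ 2) := by
        filter_upwards [hbdd k] with ω hω
        have h1 : l * V (k + 1) ω ≤ l * a :=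
          mul_le_mul_of_nonneg_left (abs_le.1 hω).2 hl0
        have h2 := freedman_exp_bound h1 hla3
        have h3 : (l * V (k + 1) ω) ^ 2 / (2 * (1 - l * a / 3)) = κ * V (k + 1) ω ^ 2 := by
          rw [hκdef]; field_simp
        simp only [Pi.add_apply, Pi.smul_apply, Pi.pow_apply, smul_eq_mul]
        linarith [h2, h3.le, h3.ge]
      have i2 : Integrable (l • V (k + 1)) μ := (hint k).smul l
      have i3 : Integrable (κ • (V (k + 1)) ^ 2) μ := ((hV2int k).smul κ : _)
      have hpolyint : Integrable ((fun _ : Ω => (1 : ℝ)) + (l • V (k + 1) + κ • (V (k + 1)) ^ 2)) μ :=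
        (integrable_const 1).add (i2.add i3)
      have h4 := condExp_mono (μ := μ) (m := F k) (hEint k) hpolyint hpt
      have hadd1 := condExp_add (μ := μ) (m := F k) (integrable_const (1 : ℝ)) (i2.add i3)
      have hadd2 := condExp_add (μ := μ) (m := F k) i2 i3
      have hs1 := condExp_smul (μ := μ) (m := F k) l (V (k + 1))
      have hs2 := condExp_smul (μ := μ) (m := F k) κ ((V (k + 1)) ^ 2)
      have hc1 : μ[(fun _ : Ω => (1 : ℝ))|F k] = fun _ => 1 := condExp_const (F.le k) 1
      filter_upwards [h4, hadd1, hadd2, hs1, hs2, hmds k] with ω e4 e1 e2 e3 e5 e6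
      refine le_trans e4 ?_
      rw [e1]
      simp only [Pi.add_apply, Pi.smul_apply, smul_eq_mul, hc1] at e2 e3 e5 e6 ⊢
      rw [e2, e3, e5, e6]
      simp
    -- supermartingale property by induction
    have hmain : ∀ k, ∫ ω, Z k ω ∂μ ≤ 1 := by
      intro k
      induction k with
      | zero => simp [hZdef, hTdef]
      | succ k ih =>
        set W : Ω → ℝ := fun ω => Z k ω * Real.exp (-(κ * (μ[(V (k + 1)) ^ 2|F k]) ω))
          with hWdef
        have hWmeas : StronglyMeasurable[F k] W := by
          rw [hWdef]
          exact (hZmeas k).mul (Real.continuous_exp.comp_stronglyMeasurable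
            ((stronglyMeasurable_condExp.const_mul κ).neg))
        have hWnn : ∀ ω, 0 ≤ W ω := fun ω => by
          rw [hWdef]
          exact mul_nonneg (hZpos k ω).le (Real.exp_pos _).le
        have hprod : Z (k + 1) = W * fun ω => Real.exp (l * V (k + 1) ω) := by
          funext ω
          simp only [hZdef, hWdef, hTdef, Pi.mul_apply]
          rw [← Real.exp_add, ← Real.exp_add, Finset.sum_range_succ, Finset.sum_range_succ]
          congr 1
          ring
        have hprodint : Integrable (W * fun ω => Real.exp (l * V (k + 1) ω)) μ := by
          rw [← hprod]; exact hZint (k + 1)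
        have hpull := condExp_mul_of_stronglyMeasurable_left (μ := μ) hWmeas hprodint (hEint k)
        have hintWc : Integrable (W * μ[(fun ω => Real.exp (l * V (k + 1) ω))|F k]) μ :=
          integrable_condExp.congr hpull
        have hle : (W * μ[(fun ω => Real.exp (l * V (k + 1) ω))|F k]) ≤ᵐ[μ] Z k := by
          filter_upwards [hcond k, hσ0 k] with ω h1 h2
          have h2' : 0 ≤ (μ[(V (k + 1)) ^ 2|F k]) ω := h2
          set s := (μ[(V (k + 1)) ^ 2|F k]) ω
          have hWZ : W ω * (1 + κ * s) ≤ Z k ω := by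
            rw [hWdef]
            have hee : Real.exp (-(κ * s)) * Real.exp (κ * s) = 1 := by
              rw [← Real.exp_add]; simp
            calc Z k ω * Real.exp (-(κ * s)) * (1 + κ * s)
                ≤ Z k ω * Real.exp (-(κ * s)) * Real.exp (κ * s) := by
                  apply mul_le_mul_of_nonneg_left _
                    (mul_nonneg (hZpos k ω).le (Real.exp_pos _).le)
                  linarith [Real.add_one_le_exp (κ * s)]
            _ = Z k ω := by rw [mul_assoc, hee, mul_one]
          calc W ω * (μ[(fun ω => Real.exp (l * V (k + 1) ω))|F k]) ω
              ≤ W ω * (1 + κ * s) := mul_le_mul_of_nonneg_left h1 (hWnn ω)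
          _ ≤ Z k ω := hWZ
        calc ∫ ω, Z (k + 1) ω ∂μ
            = ∫ ω, (W * fun ω => Real.exp (l * V (k + 1) ω)) ω ∂μ := by rw [hprod]
        _ = ∫ ω, (μ[(W * fun ω => Real.exp (l * V (k + 1) ω))|F k]) ω ∂μ :=
            (integral_condExp (F.le k)).symm
        _ = ∫ ω, (W * μ[(fun ω => Real.exp (l * V (k + 1) ω))|F k]) ω ∂μ :=
            integral_congr_ae hpull
        _ ≤ ∫ ω, Z k ω ∂μ := integral_mono_ae hintWc (hZint k) hle
        _ ≤ 1 := ih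
    -- moment generating function bound
    have hSint : Integrable (fun ω => Real.exp (l * S ω)) μ := by
      simp only [hSdef]
      refine Integrable.mono' (integrable_const (Real.exp (l * (n * a))))
        (Real.continuous_exp.comp_stronglyMeasurable
          (((hSmeas n).mono (F.le n)).const_mul l)).aestronglyMeasurable ?_
      filter_upwards [hbddall] with ω h1
      rw [Real.norm_eq_abs, abs_of_nonneg (Real.exp_pos _).le]
      apply Real.exp_le_exp.2
      apply mul_le_mul_of_nonneg_left _ hl0
      calc ∑ t ∈ Finset.range n, V (t + 1) ω ≤ ∑ t ∈ Finset.range n, a :=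
        Finset.sum_le_sum fun t _ => (abs_le.1 (h1 t)).2
      _ = n * a := by rw [Finset.sum_const, Finset.card_range, nsmul_eq_mul]
    have hmgf : ∫ ω, Real.exp (l * S ω) ∂μ ≤ Real.exp (κ * b ^ 2) := by
      have hae2 : (fun ω => Real.exp (l * S ω)) ≤ᵐ[μ]
          fun ω => Z n ω * Real.exp (κ * b ^ 2) := by
        filter_upwards [hvar] with ω hω
        have hTb : T n ω ≤ b ^ 2 := by rw [hTdef]; exact hω
        have hZe : Real.exp (l * S ω) = Z n ω * Real.exp (κ * T n ω) := by
          rw [hZdef, ← Real.exp_add, hSdef]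
          congr 1
          ring
        rw [hZe]
        apply mul_le_mul_of_nonneg_left _ (hZpos n ω).le
        exact Real.exp_le_exp.2 (mul_le_mul_of_nonneg_left hTb hκ0)
      calc ∫ ω, Real.exp (l * S ω) ∂μ
          ≤ ∫ ω, Z n ω * Real.exp (κ * b ^ 2) ∂μ :=
            integral_mono_ae hSint ((hZint n).mul_const _) hae2
      _ = (∫ ω, Z n ω ∂μ) * Real.exp (κ * b ^ 2) := integral_mul_const _ _
      _ ≤ 1 * Real.exp (κ * b ^ 2) :=
            mul_le_mul_of_nonneg_right (hmain n) (Real.exp_pos _).le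
      _ = Real.exp (κ * b ^ 2) := one_mul _
    -- arithmetic with the chosen parameters
    have hb_le_c : b ≤ c := by rw [hcdef]; linarith
    have hlx : l * x = 2 * L := by
      rw [hldef, hxdef, div_mul_eq_mul_div, div_eq_iff hc.ne', hcdef]
      linear_combination b * hsqsq
    have hden_eq : 1 - l * a / 3 = b / c := by
      have h1 : l * a / 3 = (a / 3 * Real.sqrt (2 * L)) / c := by rw [hldef]; ring
      rw [h1, one_sub_div hc.ne']
      congr 1
      rw [hcdef]; ring
    have hκb : κ * b ^ 2 ≤ L := by
      have hl2 : l ^ 2 = 2 * L / c ^ 2 := by rw [hldef, div_pow, hsqsq]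
      have hkey : κ * b ^ 2 = L * b / c := by
        rw [hκdef, hden_eq, hl2]
        exact freedman_kappa_eq L c b hc hbpos
      rw [hkey, div_le_iff₀ hc]
      exact mul_le_mul_of_nonneg_left hb_le_c hL0.le
    -- Chernoff bound
    have hchern := ProbabilityTheory.measure_ge_le_exp_mul_mgf (μ := μ) (X := S) x hl0 hSint
    have htail : (μ {ω | x ≤ S ω}).toReal ≤ δ := by
      refine hchern.trans ?_
      have hmgfle : ProbabilityTheory.mgf S μ l ≤ Real.exp (κ * b ^ 2) := hmgf
      have h1 : Real.exp (-l * x) * ProbabilityTheory.mgf S μ l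
          ≤ Real.exp (-l * x) * Real.exp (κ * b ^ 2) :=
        mul_le_mul_of_nonneg_left hmgfle (Real.exp_pos _).le
      refine h1.trans ?_
      rw [← Real.exp_add]
      have harith : -l * x + κ * b ^ 2 ≤ -L := by nlinarith
      calc Real.exp (-l * x + κ * b ^ 2) ≤ Real.exp (-L) := Real.exp_le_exp.2 harith
      _ = δ := by
        rw [hLdef, one_div, Real.log_inv, neg_neg, Real.exp_log hδ0]
    have htail' : μ {ω | x ≤ S ω} ≤ ENNReal.ofReal δ :=
      (ENNReal.le_ofReal_iff_toReal_le (measure_ne_top μ _) hδ0.le).2 htail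
    have hcompl : μ {ω | S ω ≤ x}ᶜ ≤ ENNReal.ofReal δ := by
      refine le_trans (measure_mono ?_) htail'
      intro ω hω
      simp only [Set.mem_compl_iff, Set.mem_setOf_eq, not_le] at hω ⊢
      exact hω.le
    have hfin : μ {ω | S ω ≤ x} = 1 - μ {ω | S ω ≤ x}ᶜ := by
      have h := prob_compl_eq_one_sub (μ := μ) hset.compl
      rwa [compl_compl] at h
    have hgoal : ENNReal.ofReal (1 - δ) ≤ μ {ω | S ω ≤ x} := by
      rw [hfin]
      have h2 : ENNReal.ofReal (1 - δ) = 1 - ENNReal.ofReal δ := by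
        rw [ENNReal.ofReal_sub 1 hδ0.le, ENNReal.ofReal_one]
      rw [h2]
      exact tsub_le_tsub_left hcompl 1
    rw [hsets]
    exact hgoal
end
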